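/- arXiv:1209.3996 — 4 statements merged into one kernel-verified Lean document; each statement's English description precedes it below -/
import Mathlib

section
/- Let n ∈ ℕ and let r : {1, …, 2n} → ℝ be arbitrary weights. Then Σ_{M} (−1)^{cr(M)} ∏_{{x,y} ∈ M} r_x · r_y = ∏_{x=1}^{2n} r_x, where the sum runs over all perfect matchings M of {1, …, 2n} and cr(M) is the number of crossing pairs of blocks of M. (Lemma 2.6, the signed matching identity at a vertex.) -/
open Finset

/-- `M` is a perfect matching of the finite set `X`: a partition of `X` into
two-element blocks. -/
def IsPerfectMatchingOn {α : Type} (X : Finset α) (M : Finset (Finset α)) : Prop :=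
  (∀ B ∈ M, B.card = 2) ∧ (∀ B ∈ M, B ⊆ X) ∧ ∀ x ∈ X, ∃! B, B ∈ M ∧ x ∈ B

/-- Two two-element blocks `B₁ = {a,b}` (with `a < b`) and `B₂ = {c,d}` (with `c < d`) cross,
with respect to the linear order induced by the injective key function `key`, if
`a < c < b < d` or `c < a < d < b`. -/
def CrossingBlocks {α : Type} [DecidableEq α] (key : α → ℕ) (B₁ B₂ : Finset α) : Prop :=
  ∃ a b c d : α, B₁ = {a, b} ∧ B₂ = {c, d} ∧ key a < key b ∧ key c < key d ∧
    ((key a < key c ∧ key c < key b ∧ key b < key d) ∨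
     (key c < key a ∧ key a < key d ∧ key d < key b))

/-- The number of unordered pairs of blocks of `M` that cross (computed as half the number
of ordered pairs, the crossing relation being symmetric and irreflexive). -/
noncomputable def crossingNumber {α : Type} [DecidableEq α] (key : α → ℕ)
    (M : Finset (Finset α)) : ℕ :=
  (@Finset.filter _ (fun p => CrossingBlocks key p.1 p.2) (Classical.decPred _)
    (M ×ˢ M)).card / 2

set_option linter.unusedSectionVars false
set_option linter.unusedVariables false

namespace SMaux

variable {α : Type} [DecidableEq α]

theorem pair_eq_pair {key : α → ℕ} {a b c d : α} (hab : key a < key b) (hcd : key c < key d)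
    (h : ({a, b} : Finset α) = {c, d}) : a = c ∧ b = d := by
  have hc : c ∈ ({a, b} : Finset α) := by rw [h]; simp
  have hd : d ∈ ({a, b} : Finset α) := by rw [h]; simp
  have ha : a ∈ ({c, d} : Finset α) := by rw [← h]; simp
  have hb : b ∈ ({c, d} : Finset α) := by rw [← h]; simp
  simp only [mem_insert, mem_singleton] at hc hd ha hb
  rcases hc with rfl | rfl
  · rcases hd with rfl | rfl
    · omega
    · exact ⟨rfl, rfl⟩
  · rcases hd with rfl | rfl
    · omega
    · omega

theorem cross_iff {key : α → ℕ} {a b c d : α} (hab : key a < key b) (hcd : key c < key d) :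
    CrossingBlocks key {a, b} {c, d} ↔
      ((key a < key c ∧ key c < key b ∧ key b < key d) ∨
       (key c < key a ∧ key a < key d ∧ key d < key b)) := by
  constructor
  · rintro ⟨a', b', c', d', h1, h2, hab', hcd', hcase⟩
    obtain ⟨rfl, rfl⟩ := pair_eq_pair hab hab' h1
    obtain ⟨rfl, rfl⟩ := pair_eq_pair hcd hcd' h2
    exact hcase
  · intro hcase; exact ⟨a, b, c, d, rfl, rfl, hab, hcd, hcase⟩

theorem cross_symm {key : α → ℕ} {B₁ B₂ : Finset α} (h : CrossingBlocks key B₁ B₂) :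
    CrossingBlocks key B₂ B₁ := by
  obtain ⟨a, b, c, d, h1, h2, hab, hcd, hcase⟩ := h
  exact ⟨c, d, a, b, h2, h1, hcd, hab, Or.symm hcase⟩

theorem cross_irrefl {key : α → ℕ} {a b : α} (hab : key a < key b) :
    ¬ CrossingBlocks key {a, b} {a, b} := by
  rw [cross_iff hab hab]; omega

theorem pm_disjoint {X : Finset α} {M : Finset (Finset α)} (h : IsPerfectMatchingOn X M)
    {B₁ B₂ : Finset α} (hB₁ : B₁ ∈ M) (hB₂ : B₂ ∈ M) (hne : B₁ ≠ B₂) : Disjoint B₁ B₂ := by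
  rw [Finset.disjoint_left]
  intro x hx1 hx2
  have hxX : x ∈ X := h.2.1 _ hB₁ hx1
  obtain ⟨B, _, hu⟩ := h.2.2 x hxX
  exact hne ((hu _ ⟨hB₁, hx1⟩).trans (hu _ ⟨hB₂, hx2⟩).symm)

theorem pm_intro {X : Finset α} {M : Finset (Finset α)}
    (h2 : ∀ B ∈ M, B.card = 2) (hsub : ∀ B ∈ M, B ⊆ X)
    (hcov : ∀ x ∈ X, ∃ B ∈ M, x ∈ B)
    (hdisj : ∀ B₁ ∈ M, ∀ B₂ ∈ M, B₁ ≠ B₂ → Disjoint B₁ B₂) : IsPerfectMatchingOn X M := by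
  refine ⟨h2, hsub, fun x hx => ?_⟩
  obtain ⟨B, hB, hxB⟩ := hcov x hx
  refine ⟨B, ⟨hB, hxB⟩, fun B' ⟨hB', hxB'⟩ => ?_⟩
  by_contra hne
  exact (Finset.disjoint_left.mp (hdisj B' hB' B hB hne)) hxB' hxB

theorem exists_pair {key : α → ℕ} {X : Finset α} {M : Finset (Finset α)}
    (hinj : Set.InjOn key ↑X) (h : IsPerfectMatchingOn X M) {B : Finset α} (hB : B ∈ M) :
    ∃ c d, key c < key d ∧ c ∈ X ∧ d ∈ X ∧ B = {c, d} := by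
  obtain ⟨u, v, huv, rfl⟩ := Finset.card_eq_two.mp (h.1 B hB)
  have hu : u ∈ X := h.2.1 _ hB (by simp)
  have hv : v ∈ X := h.2.1 _ hB (by simp)
  have hk : key u ≠ key v := fun e => huv (hinj hu hv e)
  rcases lt_or_gt_of_ne hk with hlt | hlt
  · exact ⟨u, v, hlt, hu, hv, rfl⟩
  · exact ⟨v, u, hlt, hv, hu, Finset.pair_comm u v⟩

noncomputable def blockOf (M : Finset (Finset α)) (x : α) : Finset α :=
  if h : ∃ B, B ∈ M ∧ x ∈ B then h.choose else ∅

theorem blockOf_mem {M : Finset (Finset α)} {x : α} (h : ∃ B, B ∈ M ∧ x ∈ B) :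
    blockOf M x ∈ M ∧ x ∈ blockOf M x := by
  rw [blockOf, dif_pos h]; exact h.choose_spec

theorem blockOf_eq {X : Finset α} {M : Finset (Finset α)} (h : IsPerfectMatchingOn X M)
    {x : α} {B : Finset α} (hx : x ∈ X) (hB : B ∈ M) (hxB : x ∈ B) : blockOf M x = B := by
  obtain ⟨B', _, hu⟩ := h.2.2 x hx
  have h1 := blockOf_mem ⟨B, hB, hxB⟩
  exact (hu _ h1).trans (hu _ ⟨hB, hxB⟩).symm

noncomputable def partnerOf (M : Finset (Finset α)) (x : α) : α :=
  if h : ∃ y, y ∈ blockOf M x ∧ y ≠ x then h.choose else x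

theorem partner_spec {X : Finset α} {M : Finset (Finset α)} (h : IsPerfectMatchingOn X M)
    {x : α} (hx : x ∈ X) :
    partnerOf M x ≠ x ∧ blockOf M x ∈ M ∧ blockOf M x = {x, partnerOf M x} := by
  obtain ⟨B0, ⟨hB0, hxB0⟩, _⟩ := h.2.2 x hx
  obtain ⟨hBM, hxB⟩ := blockOf_mem ⟨B0, hB0, hxB0⟩
  obtain ⟨u, v, huv, hBuv⟩ := Finset.card_eq_two.mp (h.1 _ hBM)
  have hex : ∃ y, y ∈ blockOf M x ∧ y ≠ x := by
    rcases (by rw [hBuv] at hxB; simpa using hxB : x = u ∨ x = v) with rfl | rfl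
    · exact ⟨v, by rw [hBuv]; simp, fun e => huv e.symm⟩
    · exact ⟨u, by rw [hBuv]; simp, huv⟩
  have hsp := hex.choose_spec
  rw [partnerOf, dif_pos hex]
  refine ⟨hsp.2, hBM, ?_⟩
  apply (Finset.eq_of_subset_of_card_le ?_ ?_).symm
  · intro y hy
    simp only [mem_insert, mem_singleton] at hy
    rcases hy with rfl | rfl
    · exact hxB
    · exact hsp.1
  · rw [h.1 _ hBM, Finset.card_insert_of_notMem (by simpa using (fun e => hsp.2 e.symm)),
      Finset.card_singleton]

theorem partner_eq {X : Finset α} {M : Finset (Finset α)} (h : IsPerfectMatchingOn X M)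
    {x y : α} (hx : x ∈ X) (hbl : blockOf M x = {x, y}) (hyx : y ≠ x) : partnerOf M x = y := by
  obtain ⟨hne, _, hsp⟩ := partner_spec h hx
  have : partnerOf M x ∈ ({x, y} : Finset α) := by rw [← hbl, hsp]; simp
  simp only [mem_insert, mem_singleton] at this
  rcases this with e | e
  · exact absurd e hne
  · exact e

noncomputable def swapM (a b : α) (M : Finset (Finset α)) : Finset (Finset α) :=
  insert {a, partnerOf M b} (insert {b, partnerOf M a}
    ((M.erase (blockOf M a)).erase (blockOf M b)))

theorem double_sum_insert {β : Type} [DecidableEq β] (S : Finset β) (A B : β)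
    (hA : A ∉ insert B S) (hB : B ∉ S) (f : β → β → ℕ) (hsym : ∀ p q, f p q = f q p) :
    ∑ p ∈ insert A (insert B S), ∑ q ∈ insert A (insert B S), f p q
      = f A A + f B B + 2 * f A B + 2 * ∑ q ∈ S, f A q + 2 * ∑ q ∈ S, f B q
        + ∑ p ∈ S, ∑ q ∈ S, f p q := by
  simp only [Finset.sum_insert hA, Finset.sum_insert hB, Finset.sum_add_distrib]
  have e1 : ∑ p ∈ S, f p A = ∑ p ∈ S, f A p := Finset.sum_congr rfl fun p _ => hsym p A
  have e2 : ∑ p ∈ S, f p B = ∑ p ∈ S, f B p := Finset.sum_congr rfl fun p _ => hsym p B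
  rw [e1, e2, hsym B A]
  ring

set_option maxHeartbeats 1000000 in
theorem swap_main {key : α → ℕ} {X : Finset α} {M : Finset (Finset α)} {a b : α}
    (hinj : Set.InjOn key ↑X) (h : IsPerfectMatchingOn X M)
    (haX : a ∈ X) (hbX : b ∈ X) (hne : a ≠ b)
    (hmina : ∀ x ∈ X, x ≠ a → key a < key x)
    (hminb : ∀ x ∈ X, x ≠ a → x ≠ b → key b < key x)
    (hab : ({a, b} : Finset α) ∉ M) :
    IsPerfectMatchingOn X (swapM a b M) ∧ ({a, b} : Finset α) ∉ swapM a b M ∧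
      swapM a b (swapM a b M) = M ∧
      (crossingNumber key (swapM a b M) = crossingNumber key M + 1 ∨
       crossingNumber key M = crossingNumber key (swapM a b M) + 1) := by
  classical
  obtain ⟨j, hpj⟩ : ∃ j, partnerOf M a = j := ⟨_, rfl⟩
  obtain ⟨k, hpk⟩ : ∃ k, partnerOf M b = k := ⟨_, rfl⟩
  obtain ⟨A, hblA⟩ : ∃ A, blockOf M a = A := ⟨_, rfl⟩
  obtain ⟨B, hblB⟩ : ∃ B, blockOf M b = B := ⟨_, rfl⟩
  obtain ⟨hja, hAM, hAeq⟩ := partner_spec h haX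
  obtain ⟨hkb, hBM, hBeq⟩ := partner_spec h hbX
  rw [hpj] at hja; rw [hpj, hblA] at hAeq; rw [hblA] at hAM
  rw [hpk] at hkb; rw [hpk, hblB] at hBeq; rw [hblB] at hBM
  have haA : a ∈ A := by rw [hAeq]; simp
  have hjA : j ∈ A := by rw [hAeq]; simp
  have hbB : b ∈ B := by rw [hBeq]; simp
  have hkB : k ∈ B := by rw [hBeq]; simp
  have hjX : j ∈ X := h.2.1 _ hAM hjA
  have hkX : k ∈ X := h.2.1 _ hBM hkB
  have hjb : j ≠ b := by
    rintro rfl; exact hab (hAeq ▸ hAM)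
  have hka : k ≠ a := by
    intro e
    apply hab
    rw [Finset.pair_comm a b, ← e, ← hBeq]
    exact hBM
  have hANB : A ≠ B := by
    intro e
    have h' : a ∈ B := e ▸ haA
    rw [hBeq] at h'
    simp only [mem_insert, mem_singleton] at h'
    rcases h' with e' | e'
    · exact hne e'
    · exact hka e'.symm
  have hjk : j ≠ k := by
    intro e
    exact (Finset.disjoint_left.mp (pm_disjoint h hAM hBM hANB)) hjA (by rw [e]; exact hkB)
  have hbA : b ∉ A := by
    rw [hAeq]; simp only [mem_insert, mem_singleton]
    rintro (e | e); exacts [hne e.symm, hjb e.symm]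
  have haB : a ∉ B := by
    rw [hBeq]; simp only [mem_insert, mem_singleton]
    rintro (e | e); exacts [hne e, hka e.symm]
  -- key inequalities
  have kab : key a < key b := hmina b hbX hne.symm
  have kaj : key a < key j := hmina j hjX hja
  have kak : key a < key k := hmina k hkX hka
  have kbj : key b < key j := hminb j hjX hja hjb
  have kbk : key b < key k := hminb k hkX hka hkb
  have kjk : key j ≠ key k := fun e => hjk (hinj hjX hkX e)
  -- decomposition of M
  obtain ⟨M₀, hM₀def⟩ : ∃ S, (M.erase A).erase B = S := ⟨_, rfl⟩
  have hBinA : B ∈ M.erase A := Finset.mem_erase.mpr ⟨Ne.symm hANB, hBM⟩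
  have hM : M = insert A (insert B M₀) := by
    rw [← hM₀def, Finset.insert_erase hBinA, Finset.insert_erase hAM]
  have hAnotin : A ∉ insert B M₀ := by
    rw [← hM₀def, Finset.insert_erase hBinA]; exact Finset.notMem_erase _ _
  have hBnot : B ∉ M₀ := by rw [← hM₀def]; exact Finset.notMem_erase _ _
  have hC0 : ∀ C ∈ M₀, C ∈ M ∧ C ≠ A ∧ C ≠ B := by
    intro C hC
    rw [← hM₀def, Finset.mem_erase, Finset.mem_erase] at hC
    exact ⟨hC.2.2, hC.2.1, hC.1⟩
  have hCav : ∀ C ∈ M₀, a ∉ C ∧ j ∉ C ∧ b ∉ C ∧ k ∉ C := by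
    intro C hC
    obtain ⟨hCM, hCA, hCB⟩ := hC0 C hC
    have d1 := pm_disjoint h hCM hAM hCA
    have d2 := pm_disjoint h hCM hBM hCB
    exact ⟨fun hx => Finset.disjoint_left.mp d1 hx haA,
           fun hx => Finset.disjoint_left.mp d1 hx hjA,
           fun hx => Finset.disjoint_left.mp d2 hx hbB,
           fun hx => Finset.disjoint_left.mp d2 hx hkB⟩
  have hswap : swapM a b M = insert {a, k} (insert {b, j} M₀) := by
    rw [swapM, hpj, hpk, hblA, hblB, hM₀def]
  have hA'B' : ({a, k} : Finset α) ≠ {b, j} := by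
    intro e
    have h' : a ∈ ({b, j} : Finset α) := e ▸ (by simp : a ∈ ({a, k} : Finset α))
    simp only [mem_insert, mem_singleton] at h'
    rcases h' with e' | e'; exacts [hne e', hja e'.symm]
  have hA'M₀ : ({a, k} : Finset α) ∉ M₀ := fun hmem => ((hCav _ hmem).1) (by simp)
  have hB'M₀ : ({b, j} : Finset α) ∉ M₀ := fun hmem => ((hCav _ hmem).2.2.1) (by simp)
  have hA'not : ({a, k} : Finset α) ∉ insert ({b, j} : Finset α) M₀ := by
    simp only [Finset.mem_insert]; rintro (e | e); exacts [hA'B' e, hA'M₀ e]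
  -- (i) swapM is a perfect matching
  have hpm' : IsPerfectMatchingOn X (swapM a b M) := by
    rw [hswap]
    have dA'B' : Disjoint ({a, k} : Finset α) ({b, j} : Finset α) := by
      rw [Finset.disjoint_left]
      intro x hx hx'
      simp only [mem_insert, mem_singleton] at hx hx'
      rcases hx with rfl | rfl <;> rcases hx' with e | e
      exacts [hne e, hja e.symm, hkb e, hjk e.symm]
    have dA'C : ∀ C ∈ M₀, Disjoint ({a, k} : Finset α) C := by
      intro C hC
      rw [Finset.disjoint_left]
      intro x hx hx'
      simp only [mem_insert, mem_singleton] at hx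
      obtain ⟨h1, _, _, h4⟩ := hCav C hC
      rcases hx with rfl | rfl; exacts [h1 hx', h4 hx']
    have dB'C : ∀ C ∈ M₀, Disjoint ({b, j} : Finset α) C := by
      intro C hC
      rw [Finset.disjoint_left]
      intro x hx hx'
      simp only [mem_insert, mem_singleton] at hx
      obtain ⟨_, h2, h3, _⟩ := hCav C hC
      rcases hx with rfl | rfl; exacts [h3 hx', h2 hx']
    apply pm_intro
    · intro C hC
      simp only [Finset.mem_insert] at hC
      rcases hC with rfl | rfl | hC
      · exact Finset.card_pair (Ne.symm hka)
      · exact Finset.card_pair (Ne.symm hjb)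
      · exact h.1 _ (hC0 _ hC).1
    · intro C hC
      simp only [Finset.mem_insert] at hC
      rcases hC with rfl | rfl | hC
      · exact Finset.insert_subset haX (by simpa using hkX)
      · exact Finset.insert_subset hbX (by simpa using hjX)
      · exact h.2.1 _ (hC0 _ hC).1
    · intro x hx
      by_cases hxa : x = a
      · exact ⟨{a, k}, Finset.mem_insert_self _ _, by simp [hxa]⟩
      by_cases hxk : x = k
      · exact ⟨{a, k}, Finset.mem_insert_self _ _, by simp [hxk]⟩
      by_cases hxb : x = b
      · exact ⟨{b, j}, by simp, by simp [hxb]⟩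
      by_cases hxj : x = j
      · exact ⟨{b, j}, by simp, by simp [hxj]⟩
      · obtain ⟨C0, ⟨hC0M, hxC0⟩, _⟩ := h.2.2 x hx
        refine ⟨C0, ?_, hxC0⟩
        have hCA : C0 ≠ A := by
          intro e
          have h' := hxC0
          rw [e, hAeq] at h'
          simp only [mem_insert, mem_singleton] at h'
          rcases h' with e' | e'
          · exact hxa e'
          · exact hxj e'
        have hCB : C0 ≠ B := by
          intro e
          have h' := hxC0
          rw [e, hBeq] at h'
          simp only [mem_insert, mem_singleton] at h'
          rcases h' with e' | e'
          · exact hxb e'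
          · exact hxk e'
        simp only [Finset.mem_insert]
        right; right
        rw [← hM₀def, Finset.mem_erase, Finset.mem_erase]
        exact ⟨hCB, hCA, hC0M⟩
    · intro B₁ hB₁ B₂ hB₂ hne12
      simp only [Finset.mem_insert] at hB₁ hB₂
      rcases hB₁ with rfl | rfl | h1 <;> rcases hB₂ with rfl | rfl | h2
      · exact absurd rfl hne12
      · exact dA'B'
      · exact dA'C _ h2
      · exact dA'B'.symm
      · exact absurd rfl hne12
      · exact dB'C _ h2
      · exact (dA'C _ h1).symm
      · exact (dB'C _ h1).symm
      · exact pm_disjoint h (hC0 _ h1).1 (hC0 _ h2).1 hne12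
  refine ⟨hpm', ?_, ?_, ?_⟩
  -- (ii) {a,b} not in swapM
  · rw [hswap]
    simp only [Finset.mem_insert]
    rintro (e | e | hmem)
    · have h' : b ∈ ({a, k} : Finset α) := e ▸ (by simp : b ∈ ({a, b} : Finset α))
      simp only [mem_insert, mem_singleton] at h'
      rcases h' with e' | e'; exacts [hne e'.symm, hkb e'.symm]
    · have h' : a ∈ ({b, j} : Finset α) := e ▸ (by simp : a ∈ ({a, b} : Finset α))
      simp only [mem_insert, mem_singleton] at h'
      rcases h' with e' | e'; exacts [hne e', hja e'.symm]
    · exact (hCav _ hmem).1 (by simp)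
  -- (iii) involution
  · have hA'mem : ({a, k} : Finset α) ∈ swapM a b M := by rw [hswap]; simp
    have hB'mem : ({b, j} : Finset α) ∈ swapM a b M := by rw [hswap]; simp
    have hbla : blockOf (swapM a b M) a = {a, k} :=
      blockOf_eq hpm' haX hA'mem (by simp)
    have hblb : blockOf (swapM a b M) b = {b, j} :=
      blockOf_eq hpm' hbX hB'mem (by simp)
    have hpa : partnerOf (swapM a b M) a = k :=
      partner_eq hpm' haX hbla hka
    have hpb : partnerOf (swapM a b M) b = j :=
      partner_eq hpm' hbX hblb hjb
    rw [swapM, hpa, hpb, hbla, hblb, hswap, Finset.erase_insert hA'not,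
      Finset.erase_insert hB'M₀, ← hAeq, ← hBeq]
    exact hM.symm
  -- (iv) crossing numbers
  · have hcount : ∀ s : Finset (Finset α),
        (@Finset.filter _ (fun p => CrossingBlocks key p.1 p.2) (Classical.decPred _)
          (s ×ˢ s)).card
        = ∑ p ∈ s, ∑ q ∈ s, (if CrossingBlocks key p q then 1 else 0) := by
      intro s
      rw [Finset.filter_congr_decidable, Finset.card_filter, Finset.sum_product]
    have cnt_symm : ∀ p q : Finset α,
        (if CrossingBlocks key p q then 1 else 0) = (if CrossingBlocks key q p then 1 else 0) := by
      intro p q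
      by_cases hpq : CrossingBlocks key p q
      · rw [if_pos hpq, if_pos (cross_symm hpq)]
      · rw [if_neg hpq, if_neg (fun e => hpq (cross_symm e))]
    have cAA : (if CrossingBlocks key A A then 1 else 0) = 0 := by
      rw [hAeq, if_neg (cross_irrefl kaj)]
    have cBB : (if CrossingBlocks key B B then 1 else 0) = 0 := by
      rw [hBeq, if_neg (cross_irrefl kbk)]
    have cA'A' : (if CrossingBlocks key ({a, k} : Finset α) {a, k} then 1 else 0) = 0 := by
      rw [if_neg (cross_irrefl kak)]
    have cB'B' : (if CrossingBlocks key ({b, j} : Finset α) {b, j} then 1 else 0) = 0 := by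
      rw [if_neg (cross_irrefl kbj)]
    have cAB : (if CrossingBlocks key A B then 1 else 0)
        = (if key j < key k then 1 else 0) := by
      refine if_congr ?_ rfl rfl
      rw [hAeq, hBeq, cross_iff kaj kbk]
      omega
    have cA'B' : (if CrossingBlocks key ({a, k} : Finset α) {b, j} then 1 else 0)
        = (if key k < key j then 1 else 0) := by
      refine if_congr ?_ rfl rfl
      rw [cross_iff kak kbj]
      omega
    have hCiff : ∀ C ∈ M₀,
        (if CrossingBlocks key A C then 1 else 0)
          = (if CrossingBlocks key ({b, j} : Finset α) C then 1 else 0) ∧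
        (if CrossingBlocks key B C then 1 else 0)
          = (if CrossingBlocks key ({a, k} : Finset α) C then 1 else 0) := by
      intro C hC
      obtain ⟨hCM, _, _⟩ := hC0 C hC
      obtain ⟨c, d, hcd, hcX, hdX, hCeq⟩ := exists_pair hinj h hCM
      obtain ⟨haC, hjC, hbC, hkC⟩ := hCav C hC
      have hcC : c ∈ C := by rw [hCeq]; simp
      have hdC : d ∈ C := by rw [hCeq]; simp
      have hca : c ≠ a := fun e => haC (e ▸ hcC)
      have hcb : c ≠ b := fun e => hbC (e ▸ hcC)
      have hda : d ≠ a := fun e => haC (e ▸ hdC)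
      have hdb : d ≠ b := fun e => hbC (e ▸ hdC)
      have k1 : key a < key c := hmina c hcX hca
      have k2 : key b < key c := hminb c hcX hca hcb
      have k3 : key a < key d := hmina d hdX hda
      have k4 : key b < key d := hminb d hdX hda hdb
      constructor
      · refine if_congr ?_ rfl rfl
        rw [hAeq, hCeq, cross_iff kaj hcd, cross_iff kbj hcd]
        omega
      · refine if_congr ?_ rfl rfl
        rw [hBeq, hCeq, cross_iff kbk hcd, cross_iff kak hcd]
        omega
    have hsum1 : ∑ q ∈ M₀, (if CrossingBlocks key A q then 1 else 0)
        = ∑ q ∈ M₀, (if CrossingBlocks key ({b, j} : Finset α) q then 1 else 0) :=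
      Finset.sum_congr rfl fun q hq => (hCiff q hq).1
    have hsum2 : ∑ q ∈ M₀, (if CrossingBlocks key B q then 1 else 0)
        = ∑ q ∈ M₀, (if CrossingBlocks key ({a, k} : Finset α) q then 1 else 0) :=
      Finset.sum_congr rfl fun q hq => (hCiff q hq).2
    have hcM : (@Finset.filter _ (fun p => CrossingBlocks key p.1 p.2) (Classical.decPred _)
        (M ×ˢ M)).card
        = (2 * ∑ q ∈ M₀, (if CrossingBlocks key ({b, j} : Finset α) q then 1 else 0)
            + 2 * ∑ q ∈ M₀, (if CrossingBlocks key ({a, k} : Finset α) q then 1 else 0)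
            + ∑ p ∈ M₀, ∑ q ∈ M₀, (if CrossingBlocks key p q then 1 else 0))
          + 2 * (if key j < key k then 1 else 0) := by
      conv_lhs => rw [hM]
      rw [hcount, double_sum_insert _ _ _ hAnotin hBnot _ cnt_symm,
        cAA, cBB, cAB, hsum1, hsum2]
      ring
    have hcM' : (@Finset.filter _ (fun p => CrossingBlocks key p.1 p.2) (Classical.decPred _)
        (swapM a b M ×ˢ swapM a b M)).card
        = (2 * ∑ q ∈ M₀, (if CrossingBlocks key ({b, j} : Finset α) q then 1 else 0)
            + 2 * ∑ q ∈ M₀, (if CrossingBlocks key ({a, k} : Finset α) q then 1 else 0)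
            + ∑ p ∈ M₀, ∑ q ∈ M₀, (if CrossingBlocks key p q then 1 else 0))
          + 2 * (if key k < key j then 1 else 0) := by
      conv_lhs => rw [hswap]
      rw [hcount, double_sum_insert _ _ _ hA'not hB'M₀ _ cnt_symm,
        cA'A', cB'B', cA'B']
      ring
    rcases lt_or_gt_of_ne kjk with hlt | hlt
    · have e1 : (if key j < key k then 1 else 0) = 1 := if_pos hlt
      have e2 : (if key k < key j then 1 else 0) = 0 := if_neg (by omega)
      rw [crossingNumber, crossingNumber, hcM, hcM', e1, e2]
      right; omega
    · have e1 : (if key j < key k then 1 else 0) = 0 := if_neg (by omega)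
      have e2 : (if key k < key j then 1 else 0) = 1 := if_pos hlt
      rw [crossingNumber, crossingNumber, hcM, hcM', e1, e2]
      left; omega
theorem no_cross_min {key : α → ℕ} {X : Finset α} {M : Finset (Finset α)} {a b : α}
    (hinj : Set.InjOn key ↑X) (h : IsPerfectMatchingOn X M)
    (kab : key a < key b)
    (hmina : ∀ x ∈ X, x ≠ a → key a < key x)
    (hminb : ∀ x ∈ X, x ≠ a → x ≠ b → key b < key x)
    (hab : ({a, b} : Finset α) ∈ M) {C : Finset α} (hC : C ∈ M) :
    ¬ CrossingBlocks key {a, b} C := by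
  intro hcr
  by_cases hCe : C = {a, b}
  · rw [hCe] at hcr; exact cross_irrefl kab hcr
  · obtain ⟨c, d, hcd, hcX, hdX, hCeq⟩ := exists_pair hinj h hC
    have hdis := pm_disjoint h hab hC (fun e => hCe e.symm)
    have hcC : c ∈ C := by rw [hCeq]; simp
    have hdC : d ∈ C := by rw [hCeq]; simp
    have hcab := Finset.disjoint_right.mp hdis hcC
    have hdab := Finset.disjoint_right.mp hdis hdC
    simp only [mem_insert, mem_singleton] at hcab hdab
    push_neg at hcab hdab
    have k2 : key b < key c := hminb c hcX hcab.1 hcab.2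
    have k4 : key b < key d := hminb d hdX hdab.1 hdab.2
    rw [hCeq, cross_iff kab hcd] at hcr
    omega

theorem sum_signed [Fintype α] (key : α → ℕ) :
    ∀ (N : ℕ) (X : Finset α), X.card = N → Set.InjOn key ↑X → Even X.card →
      ∑ M ∈ (@Finset.filter _ (fun M => IsPerfectMatchingOn X M) (Classical.decPred _)
          (Finset.univ : Finset (Finset (Finset α)))),
        (-1 : ℝ) ^ crossingNumber key M = 1 := by
  intro N
  induction N using Nat.strong_induction_on with
  | _ N IH =>
  intro X hXcard hinj heven
  classical
  rcases X.eq_empty_or_nonempty with rfl | hXne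
  · have hset : (@Finset.filter _ (fun M => IsPerfectMatchingOn (∅ : Finset α) M)
        (Classical.decPred _) (Finset.univ : Finset (Finset (Finset α)))) = {∅} := by
      ext M
      simp only [Finset.mem_filter, Finset.mem_univ, true_and, Finset.mem_singleton]
      constructor
      · intro hM
        rcases M.eq_empty_or_nonempty with rfl | ⟨Bb, hB⟩
        · rfl
        · have hc := hM.1 Bb hB
          obtain ⟨x, hx⟩ := Finset.card_pos.mp (by omega : 0 < Bb.card)
          exact absurd (hM.2.1 Bb hB hx) (Finset.notMem_empty x)
      · rintro rfl
        exact ⟨fun B hB => absurd hB (Finset.notMem_empty _),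
               fun B hB => absurd hB (Finset.notMem_empty _),
               fun x hx => absurd hx (Finset.notMem_empty _)⟩
    rw [hset, Finset.sum_singleton]
    have hcr : crossingNumber key (∅ : Finset (Finset α)) = 0 := by
      rw [crossingNumber]
      simp
    rw [hcr, pow_zero]
  · obtain ⟨a, haX, hamin⟩ := Finset.exists_min_image X key hXne
    have hcard0 : X.card ≠ 0 := Finset.card_ne_zero_of_mem haX
    have hcard2 : 2 ≤ X.card := by
      obtain ⟨m, hm⟩ := heven
      omega
    have hXane : (X.erase a).Nonempty := by
      rw [← Finset.card_pos, Finset.card_erase_of_mem haX]; omega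
    obtain ⟨b, hbXe, hbmin⟩ := Finset.exists_min_image (X.erase a) key hXane
    have hbX : b ∈ X := Finset.mem_of_mem_erase hbXe
    have hne : a ≠ b := (Finset.ne_of_mem_erase hbXe).symm
    have hmina : ∀ x ∈ X, x ≠ a → key a < key x := fun x hx hxa =>
      lt_of_le_of_ne (hamin x hx) (fun e => hxa (hinj haX hx e).symm)
    have hminb : ∀ x ∈ X, x ≠ a → x ≠ b → key b < key x := fun x hx hxa hxb =>
      lt_of_le_of_ne (hbmin x (Finset.mem_erase.mpr ⟨hxa, hx⟩))
        (fun e => hxb (hinj hbX hx e).symm)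
    have kab : key a < key b := hmina b hbX hne.symm
    have hmem1 : ∀ M, M ∈ Finset.filter (fun M => ({a, b} : Finset α) ∈ M)
        (@Finset.filter _ (fun M => IsPerfectMatchingOn X M) (Classical.decPred _)
          (Finset.univ : Finset (Finset (Finset α)))) →
        IsPerfectMatchingOn X M ∧ ({a, b} : Finset α) ∈ M := by
      intro M hM
      simp only [Finset.mem_filter, Finset.mem_univ, true_and] at hM
      exact hM
    have hmem2 : ∀ M, M ∈ Finset.filter (fun M => ¬ ({a, b} : Finset α) ∈ M)
        (@Finset.filter _ (fun M => IsPerfectMatchingOn X M) (Classical.decPred _)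
          (Finset.univ : Finset (Finset (Finset α)))) →
        IsPerfectMatchingOn X M ∧ ({a, b} : Finset α) ∉ M := by
      intro M hM
      simp only [Finset.mem_filter, Finset.mem_univ, true_and] at hM
      exact hM
    have hzero : ∑ M ∈ Finset.filter (fun M => ¬ ({a, b} : Finset α) ∈ M)
        (@Finset.filter _ (fun M => IsPerfectMatchingOn X M) (Classical.decPred _)
          (Finset.univ : Finset (Finset (Finset α)))),
        (-1 : ℝ) ^ crossingNumber key M = 0 := by
      refine Finset.sum_involution (fun M _ => swapM a b M) ?_ ?_ ?_ ?_
      · intro M hM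
        obtain ⟨hpm, hnab⟩ := hmem2 M hM
        rcases (swap_main hinj hpm haX hbX hne hmina hminb hnab).2.2.2 with e | e
        · rw [e, pow_succ]; ring
        · rw [e, pow_succ]; ring
      · intro M hM _
        intro e
        have e' : swapM a b M = M := e
        have hrel := (swap_main hinj (hmem2 M hM).1 haX hbX hne hmina hminb (hmem2 M hM).2).2.2.2
        rw [e'] at hrel
        omega
      · intro M hM
        obtain ⟨hpm, hnab⟩ := hmem2 M hM
        have hmain := swap_main (key := key) hinj hpm haX hbX hne hmina hminb hnab
        simp only [Finset.mem_filter, Finset.mem_univ, true_and]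
        exact ⟨hmain.1, hmain.2.1⟩
      · intro M hM
        exact (swap_main hinj (hmem2 M hM).1 haX hbX hne hmina hminb (hmem2 M hM).2).2.2.1
    have hbsub : (X.erase a).erase b ⊆ X :=
      subset_trans (Finset.erase_subset _ _) (Finset.erase_subset _ _)
    have hYcard : ((X.erase a).erase b).card = N - 2 := by
      rw [Finset.card_erase_of_mem hbXe, Finset.card_erase_of_mem haX, hXcard]
      omega
    have habN : ∀ {NN : Finset (Finset α)}, IsPerfectMatchingOn ((X.erase a).erase b) NN →
        ({a, b} : Finset α) ∉ NN := by
      intro NN hNN hmem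
      have : a ∈ (X.erase a).erase b := hNN.2.1 _ hmem (by simp)
      exact (Finset.mem_erase.mp (Finset.mem_erase.mp this).2).1 rfl
    have hone : ∑ M ∈ Finset.filter (fun M => ({a, b} : Finset α) ∈ M)
        (@Finset.filter _ (fun M => IsPerfectMatchingOn X M) (Classical.decPred _)
          (Finset.univ : Finset (Finset (Finset α)))),
        (-1 : ℝ) ^ crossingNumber key M = 1 := by
      have hIH := IH (N - 2) (by omega) ((X.erase a).erase b) hYcard
        (hinj.mono (Finset.coe_subset.mpr hbsub))
        (by obtain ⟨m, hm⟩ := heven; rw [hYcard]; exact ⟨m - 1, by omega⟩)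
      refine Eq.trans (Finset.sum_nbij' (fun M => M.erase {a, b}) (fun M => insert {a, b} M)
        ?_ ?_ ?_ ?_ ?_) hIH
      · -- i maps into target
        intro M hM
        obtain ⟨hpm, hmem⟩ := hmem1 M hM
        simp only [Finset.mem_filter, Finset.mem_univ, true_and]
        apply pm_intro
        · intro C hC; exact hpm.1 C (Finset.mem_of_mem_erase hC)
        · intro C hC
          obtain ⟨hCne, hCM⟩ := Finset.mem_erase.mp hC
          have hdis := pm_disjoint hpm hCM hmem hCne
          intro x hxC
          have hxX : x ∈ X := hpm.2.1 C hCM hxC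
          have hxab := Finset.disjoint_left.mp hdis hxC
          simp only [mem_insert, mem_singleton] at hxab
          push_neg at hxab
          exact Finset.mem_erase.mpr ⟨hxab.2, Finset.mem_erase.mpr ⟨hxab.1, hxX⟩⟩
        · intro x hx
          obtain ⟨hxb, hx'⟩ := Finset.mem_erase.mp hx
          obtain ⟨hxa, hxX⟩ := Finset.mem_erase.mp hx'
          obtain ⟨C, ⟨hCM, hxC⟩, _⟩ := hpm.2.2 x hxX
          refine ⟨C, Finset.mem_erase.mpr ⟨?_, hCM⟩, hxC⟩
          intro e
          rw [e] at hxC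
          simp only [mem_insert, mem_singleton] at hxC
          rcases hxC with e' | e'; exacts [hxa e', hxb e']
        · intro B₁ hB₁ B₂ hB₂ hne12
          exact pm_disjoint hpm (Finset.mem_of_mem_erase hB₁)
            (Finset.mem_of_mem_erase hB₂) hne12
      · -- j maps into source
        intro NN hNN
        simp only [Finset.mem_filter, Finset.mem_univ, true_and] at hNN ⊢
        have hnab : ({a, b} : Finset α) ∉ NN := habN hNN
        refine ⟨?_, Finset.mem_insert_self _ _⟩
        have hdisab : ∀ C ∈ NN, Disjoint ({a, b} : Finset α) C := by
          intro C hC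
          rw [Finset.disjoint_left]
          intro x hx hxC
          have hxY : x ∈ (X.erase a).erase b := hNN.2.1 C hC hxC
          obtain ⟨hxb, hx'⟩ := Finset.mem_erase.mp hxY
          obtain ⟨hxa, _⟩ := Finset.mem_erase.mp hx'
          simp only [mem_insert, mem_singleton] at hx
          rcases hx with e | e; exacts [hxa e, hxb e]
        apply pm_intro
        · intro C hC
          rcases Finset.mem_insert.mp hC with rfl | hC'
          · exact Finset.card_pair hne
          · exact hNN.1 C hC'
        · intro C hC
          rcases Finset.mem_insert.mp hC with rfl | hC'
          · exact Finset.insert_subset haX (by simpa using hbX)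
          · exact subset_trans (hNN.2.1 C hC') hbsub
        · intro x hx
          by_cases hxa : x = a
          · exact ⟨{a, b}, Finset.mem_insert_self _ _, by simp [hxa]⟩
          by_cases hxb : x = b
          · exact ⟨{a, b}, Finset.mem_insert_self _ _, by simp [hxb]⟩
          · have hxY : x ∈ (X.erase a).erase b :=
              Finset.mem_erase.mpr ⟨hxb, Finset.mem_erase.mpr ⟨hxa, hx⟩⟩
            obtain ⟨C, ⟨hCM, hxC⟩, _⟩ := hNN.2.2 x hxY
            exact ⟨C, Finset.mem_insert_of_mem hCM, hxC⟩
        · intro B₁ hB₁ B₂ hB₂ hne12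
          rcases Finset.mem_insert.mp hB₁ with rfl | h1
          · rcases Finset.mem_insert.mp hB₂ with rfl | h2
            · exact absurd rfl hne12
            · exact hdisab _ h2
          · rcases Finset.mem_insert.mp hB₂ with rfl | h2
            · exact (hdisab _ h1).symm
            · exact pm_disjoint hNN h1 h2 hne12
      · intro M hM
        exact Finset.insert_erase (hmem1 M hM).2
      · intro NN hNN
        simp only [Finset.mem_filter, Finset.mem_univ, true_and] at hNN
        exact Finset.erase_insert (habN hNN)
      · intro M hM
        obtain ⟨hpm, hmem⟩ := hmem1 M hM
        have hsets : (@Finset.filter _ (fun p => CrossingBlocks key p.1 p.2)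
            (Classical.decPred _) (M ×ˢ M))
            = (@Finset.filter _ (fun p => CrossingBlocks key p.1 p.2)
            (Classical.decPred _) ((M.erase {a, b}) ×ˢ (M.erase {a, b}))) := by
          ext p
          simp only [Finset.mem_filter, Finset.mem_product, Finset.mem_erase]
          constructor
          · rintro ⟨⟨h1, h2⟩, hc⟩
            refine ⟨⟨⟨?_, h1⟩, ?_, h2⟩, hc⟩
            · intro e
              rw [e] at hc
              exact no_cross_min hinj hpm kab hmina hminb hmem h2 hc
            · intro e
              rw [e] at hc
              exact no_cross_min hinj hpm kab hmina hminb hmem h1 (cross_symm hc)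
          · rintro ⟨⟨⟨_, h1⟩, _, h2⟩, hc⟩
            exact ⟨⟨h1, h2⟩, hc⟩
        have hcr : crossingNumber key M = crossingNumber key (M.erase {a, b}) := by
          rw [crossingNumber, crossingNumber, hsets]
        show ((-1 : ℝ) ^ crossingNumber key M)
          = (-1 : ℝ) ^ crossingNumber key (M.erase {a, b})
        rw [hcr]
    have hsplit := Finset.sum_filter_add_sum_filter_not
      (@Finset.filter _ (fun M => IsPerfectMatchingOn X M) (Classical.decPred _)
        (Finset.univ : Finset (Finset (Finset α))))
      (fun M => ({a, b} : Finset α) ∈ M)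
      (fun M => (-1 : ℝ) ^ crossingNumber key M)
    rw [← hsplit, hone, hzero, add_zero]
end SMaux

/-- The signed matching identity at a vertex (Lemma 2.6): the signed sum over all perfect
matchings `M` of `{1, …, 2n}` of `(−1)^{cr(M)}` times the product of `r_x · r_y` over the
blocks `{x,y}` of `M` equals `∏ x, r x`. -/
theorem signed_matching_identity (n : ℕ) (r : Fin (2 * n) → ℝ) :
    ∑ M ∈ (@Finset.filter _ (fun M => IsPerfectMatchingOn Finset.univ M)
        (Classical.decPred _) (Finset.univ : Finset (Finset (Finset (Fin (2 * n)))))),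
      (-1 : ℝ) ^ crossingNumber Fin.val M * ∏ B ∈ M, ∏ x ∈ B, r x
    = ∏ x, r x := by
  classical
  have hprod : ∀ M ∈ (@Finset.filter _ (fun M => IsPerfectMatchingOn Finset.univ M)
      (Classical.decPred _) (Finset.univ : Finset (Finset (Finset (Fin (2 * n)))))),
      (∏ B ∈ M, ∏ x ∈ B, r x) = ∏ x, r x := by
    intro M hM
    simp only [Finset.mem_filter, Finset.mem_univ, true_and] at hM
    have hdisj : (↑M : Set (Finset (Fin (2 * n)))).PairwiseDisjoint id := by
      intro B₁ h1 B₂ h2 hne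
      exact SMaux.pm_disjoint hM (by exact_mod_cast h1) (by exact_mod_cast h2) hne
    have hbi : M.biUnion id = Finset.univ := by
      apply Finset.eq_univ_of_forall
      intro x
      obtain ⟨B, ⟨hB, hxB⟩, _⟩ := hM.2.2 x (Finset.mem_univ x)
      exact Finset.mem_biUnion.mpr ⟨B, hB, hxB⟩
    rw [← hbi, Finset.prod_biUnion hdisj]
    rfl
  have hmain := SMaux.sum_signed (α := Fin (2 * n)) Fin.val (Finset.univ.card) Finset.univ
    rfl (Fin.val_injective.injOn) (by simp [Finset.card_univ, Fintype.card_fin])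
  calc ∑ M ∈ (@Finset.filter _ (fun M => IsPerfectMatchingOn Finset.univ M)
        (Classical.decPred _) (Finset.univ : Finset (Finset (Finset (Fin (2 * n)))))),
      (-1 : ℝ) ^ crossingNumber Fin.val M * ∏ B ∈ M, ∏ x ∈ B, r x
      = ∑ M ∈ (@Finset.filter _ (fun M => IsPerfectMatchingOn Finset.univ M)
        (Classical.decPred _) (Finset.univ : Finset (Finset (Finset (Fin (2 * n)))))),
      (-1 : ℝ) ^ crossingNumber Fin.val M * ∏ x, r x :=
        Finset.sum_congr rfl (fun M hM => by rw [hprod M hM])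
    _ = (∑ M ∈ (@Finset.filter _ (fun M => IsPerfectMatchingOn Finset.univ M)
        (Classical.decPred _) (Finset.univ : Finset (Finset (Finset (Fin (2 * n)))))),
      (-1 : ℝ) ^ crossingNumber Fin.val M) * ∏ x, r x := by rw [Finset.sum_mul]
    _ = 1 * ∏ x, r x := by rw [hmain]
    _ = ∏ x, r x := one_mul _
end

section
/- Let G be a finite simple graph in which every vertex has even degree, let r : E(G) → ℝ, and for each vertex v fix a linear order on the set E_v of edges incident to v. Then Σ_{(M_v)_{v ∈ V(G)}} ∏_{v ∈ V(G)} [ (−1)^{cr(M_v)} ∏_{{e,f} ∈ M_v} r_e · r_f ] = ∏_{e ∈ E(G)} r_e², where the sum runs over all families (M_v) with M_v a perfect matching of E_v, and cr(M_v) is the number of crossing pairs of blocks of M_v with respect to the chosen linear order on E_v. (Proposition 2.7, Matching Decomposition; with r_e = √K_e this gives ∏_{e ∈ E(G)} K_e as a signed sum over local matchings.) -/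
open Finset

namespace MDaux

open scoped Classical

set_option linter.unusedSectionVars false

variable {α : Type} [DecidableEq α]

noncomputable def cN (key : α → ℕ) (B₁ B₂ : Finset α) : ℕ :=
  if CrossingBlocks key B₁ B₂ then 1 else 0

lemma crossingNumber_eq_sum (key : α → ℕ) (M : Finset (Finset α)) :
    crossingNumber key M = (∑ B₁ ∈ M, ∑ B₂ ∈ M, cN key B₁ B₂) / 2 := by
  unfold crossingNumber cN
  congr 1
  rw [Finset.filter_congr_decidable, Finset.card_filter, Finset.sum_product]

lemma pair_rep {key : α → ℕ} {u v a b : α} (h : ({a, b} : Finset α) = {u, v})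
    (huv : key u < key v) (hab : key a < key b) : a = u ∧ b = v := by
  have ha : a ∈ ({u, v} : Finset α) := h ▸ (by simp)
  have hb : b ∈ ({u, v} : Finset α) := h ▸ (by simp)
  simp only [mem_insert, mem_singleton] at ha hb
  rcases ha with rfl | rfl <;> rcases hb with rfl | rfl
  · exact absurd hab (lt_irrefl _)
  · exact ⟨rfl, rfl⟩
  · exact absurd (hab.trans huv) (lt_irrefl _)
  · exact absurd hab (lt_irrefl _)

lemma cross_iff {key : α → ℕ} {u v c d : α} (huv : key u < key v) (hcd : key c < key d) :
    CrossingBlocks key {u, v} {c, d} ↔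
      ((key u < key c ∧ key c < key v ∧ key v < key d) ∨
       (key c < key u ∧ key u < key d ∧ key d < key v)) := by
  constructor
  · rintro ⟨a, b, c', d', h1, h2, hab, hcd', hx⟩
    obtain ⟨rfl, rfl⟩ := pair_rep h1.symm huv hab
    obtain ⟨rfl, rfl⟩ := pair_rep h2.symm hcd hcd'
    exact hx
  · intro h; exact ⟨u, v, c, d, rfl, rfl, huv, hcd, h⟩

lemma cN_self {key : α → ℕ} {u v : α} (huv : key u < key v) :
    cN key {u, v} {u, v} = 0 := by
  simp only [cN, ite_eq_right_iff, cross_iff huv huv]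
  omega

lemma pm_unique_block {X : Finset α} {M : Finset (Finset α)} (h : IsPerfectMatchingOn X M)
    {B₁ B₂ : Finset α} {x : α}
    (h1 : B₁ ∈ M) (h2 : B₂ ∈ M) (hx1 : x ∈ B₁) (hx2 : x ∈ B₂) : B₁ = B₂ := by
  have hxX : x ∈ X := h.2.1 B₁ h1 hx1
  obtain ⟨B, _, hu⟩ := h.2.2 x hxX
  rw [hu B₁ ⟨h1, hx1⟩, hu B₂ ⟨h2, hx2⟩]

lemma block_rep {B : Finset α} (h : B.card = 2) {x : α} (hx : x ∈ B) :
    ∃ y, y ≠ x ∧ B = {x, y} := by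
  obtain ⟨u, v, huv, rfl⟩ := Finset.card_eq_two.mp h
  rcases Finset.mem_insert.mp hx with rfl | hv
  · exact ⟨v, huv.symm, rfl⟩
  · rw [Finset.mem_singleton] at hv; subst hv
    exact ⟨u, huv, by rw [Finset.pair_comm]⟩

lemma card_two_rep {X B : Finset α} {key : α → ℕ} (hinj : Set.InjOn key ↑X)
    (h : B.card = 2) (hBX : B ⊆ X) : ∃ c d, key c < key d ∧ B = {c, d} := by
  obtain ⟨c, d, hcd, rfl⟩ := Finset.card_eq_two.mp h
  have hc : c ∈ X := hBX (by simp)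
  have hd : d ∈ X := hBX (by simp)
  have hk : key c ≠ key d := fun he => hcd (hinj hc hd he)
  rcases hk.lt_or_gt with h' | h'
  · exact ⟨c, d, h', rfl⟩
  · exact ⟨d, c, h', Finset.pair_comm c d⟩

lemma pm_biUnion {X : Finset α} {M : Finset (Finset α)} (h : IsPerfectMatchingOn X M) :
    M.biUnion id = X := by
  ext e
  simp only [Finset.mem_biUnion, id]
  constructor
  · rintro ⟨B, hB, he⟩; exact h.2.1 B hB he
  · intro he; obtain ⟨B, hB, -⟩ := h.2.2 e he; exact ⟨B, hB.1, hB.2⟩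

lemma pm_prod {X : Finset α} {M : Finset (Finset α)} (h : IsPerfectMatchingOn X M)
    {β : Type*} [CommMonoid β] (f : α → β) :
    ∏ B ∈ M, ∏ e ∈ B, f e = ∏ e ∈ X, f e := by
  have hd : (↑M : Set (Finset α)).PairwiseDisjoint (id : Finset α → Finset α) := by
    intro B₁ h1 B₂ h2 hne
    simp only [Finset.mem_coe] at h1 h2
    rw [Function.onFun, Finset.disjoint_left]
    intro x hx1 hx2
    exact hne (pm_unique_block h h1 h2 hx1 hx2)
  rw [← pm_biUnion h, Finset.prod_biUnion hd]
  rfl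

lemma expand1 (key : α → ℕ) (P : Finset α) (C : Finset (Finset α)) (hP : P ∉ C) :
    ∑ B₁ ∈ insert P C, ∑ B₂ ∈ insert P C, cN key B₁ B₂
      = cN key P P + (∑ B ∈ C, (cN key P B + cN key B P))
        + ∑ B₁ ∈ C, ∑ B₂ ∈ C, cN key B₁ B₂ := by
  simp only [Finset.sum_insert hP, Finset.sum_add_distrib]
  ring

lemma expand2 (key : α → ℕ) (P Q : Finset α) (C : Finset (Finset α))
    (hP : P ∉ insert Q C) (hQ : Q ∉ C) :
    ∑ B₁ ∈ insert P (insert Q C), ∑ B₂ ∈ insert P (insert Q C), cN key B₁ B₂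
      = (cN key P P + cN key Q Q + cN key P Q + cN key Q P)
        + (∑ B ∈ C, (cN key P B + cN key B P + cN key Q B + cN key B Q))
        + ∑ B₁ ∈ C, ∑ B₂ ∈ C, cN key B₁ B₂ := by
  simp only [Finset.sum_insert hP, Finset.sum_insert hQ, Finset.sum_add_distrib]
  ring

lemma image_swap_invol (a b : α) (M : Finset (Finset α)) :
    (M.image (Finset.image (Equiv.swap a b))).image (Finset.image (Equiv.swap a b)) = M := by
  rw [Finset.image_image]
  have : ∀ B : Finset α, (Finset.image (Equiv.swap a b) ∘ Finset.image (Equiv.swap a b)) B = B := by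
    intro B
    simp only [Function.comp_apply, Finset.image_image]
    have h2 : ∀ x ∈ B, (Equiv.swap a b ∘ Equiv.swap a b) x = id x := by
      intro x _; simp [Equiv.swap_apply_self]
    rw [Finset.image_congr h2, Finset.image_id]
  rw [Finset.image_congr (fun B _ => this B)]
  simp

lemma pm_image_swap {X : Finset α} {M : Finset (Finset α)} {a b : α}
    (haX : a ∈ X) (hbX : b ∈ X) (h : IsPerfectMatchingOn X M) :
    IsPerfectMatchingOn X (M.image (Finset.image (Equiv.swap a b))) := by
  set σ := Equiv.swap a b with hσ
  have hmapX : ∀ x ∈ X, σ x ∈ X := by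
    intro x hx
    rcases eq_or_ne x a with rfl | hxa
    · rw [hσ, Equiv.swap_apply_left]; exact hbX
    rcases eq_or_ne x b with rfl | hxb
    · rw [hσ, Equiv.swap_apply_right]; exact haX
    · rw [hσ, Equiv.swap_apply_of_ne_of_ne hxa hxb]; exact hx
  refine ⟨?_, ?_, ?_⟩
  · intro B hB
    obtain ⟨B₀, hB₀, rfl⟩ := Finset.mem_image.mp hB
    rw [Finset.card_image_of_injective _ (Equiv.injective σ)]
    exact h.1 B₀ hB₀
  · intro B hB e he
    obtain ⟨B₀, hB₀, rfl⟩ := Finset.mem_image.mp hB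
    obtain ⟨x, hx, rfl⟩ := Finset.mem_image.mp he
    exact hmapX x (h.2.1 B₀ hB₀ hx)
  · intro x hx
    obtain ⟨B, ⟨hBM, hxB⟩, hu⟩ := h.2.2 (σ x) (hmapX x hx)
    refine ⟨B.image σ, ⟨Finset.mem_image_of_mem _ hBM, ?_⟩, ?_⟩
    · refine Finset.mem_image.mpr ⟨σ x, hxB, ?_⟩
      rw [hσ]; exact Equiv.swap_apply_self a b x
    · rintro B' ⟨hB'M, hxB'⟩
      obtain ⟨C, hCM, rfl⟩ := Finset.mem_image.mp hB'M
      obtain ⟨c, hcC, hcx⟩ := Finset.mem_image.mp hxB'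
      have : c = σ x := by
        have := congrArg σ hcx
        rwa [hσ, Equiv.swap_apply_self] at this
      subst this
      rw [hu C ⟨hCM, hcC⟩]

lemma signed_sum [Fintype α] (key : α → ℕ) :
    ∀ (n : ℕ) (X : Finset α), X.card = n → Set.InjOn key ↑X → Even n →
      ∑ M ∈ filter (fun M => IsPerfectMatchingOn X M) univ,
        (-1 : ℝ) ^ crossingNumber key M = 1 := by
  intro n
  induction n using Nat.strong_induction_on with
  | _ n ih =>
    intro X hcard hinj heven
    obtain ⟨m, hm⟩ := heven
    rcases Nat.eq_zero_or_pos n with hn0 | hpos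
    · subst hn0
      obtain rfl : X = ∅ := Finset.card_eq_zero.mp hcard
      have hfe : filter (fun M => IsPerfectMatchingOn (∅ : Finset α) M) univ
          = {(∅ : Finset (Finset α))} := by
        ext M
        simp only [mem_filter, mem_univ, true_and, mem_singleton]
        constructor
        · rintro ⟨h2, hsub, -⟩
          rcases Finset.eq_empty_or_nonempty M with rfl | ⟨B, hB⟩
          · rfl
          · have hc := h2 B hB
            have hB0 : B = ∅ := Finset.subset_empty.mp (hsub B hB)
            rw [hB0] at hc
            simp at hc
        · rintro rfl
          exact ⟨fun B hB => absurd hB (Finset.notMem_empty B),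
                 fun B hB => absurd hB (Finset.notMem_empty B),
                 fun x hx => absurd hx (Finset.notMem_empty x)⟩
      rw [hfe]
      have hc0 : crossingNumber key (∅ : Finset (Finset α)) = 0 := by
        simp [crossingNumber]
      simp [hc0]
    · -- inductive step
      have hn2 : 2 ≤ n := by omega
      have hX1 : X.Nonempty := Finset.card_pos.mp (by omega)
      obtain ⟨a, haX, hamin⟩ := X.exists_min_image key hX1
      have hX2 : (X.erase a).Nonempty := by
        rw [← Finset.card_pos, Finset.card_erase_of_mem haX]; omega
      obtain ⟨b, hbX', hbmin⟩ := (X.erase a).exists_min_image key hX2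
      have hba : b ≠ a := (Finset.mem_erase.mp hbX').1
      have hbX : b ∈ X := (Finset.mem_erase.mp hbX').2
      have hlt_a : ∀ e ∈ X, e ≠ a → key a < key e := fun e he hne =>
        lt_of_le_of_ne (hamin e he) fun h => hne (hinj he haX h.symm)
      have hlt_b : ∀ e ∈ X, e ≠ a → e ≠ b → key b < key e := fun e he hea heb =>
        lt_of_le_of_ne (hbmin e (Finset.mem_erase.mpr ⟨hea, he⟩))
          fun h => heb (hinj he hbX h.symm)
      have hab : key a < key b := hlt_a b hbX hba
      have hne_ab : a ≠ b := fun h => by rw [h] at hab; exact lt_irrefl _ hab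
      -- core of the sign-reversing involution
      have hcore : ∀ M, IsPerfectMatchingOn X M → ({a, b} : Finset α) ∉ M →
          M.image (Finset.image (Equiv.swap a b)) ≠ M ∧
          (-1 : ℝ) ^ crossingNumber key (M.image (Finset.image (Equiv.swap a b)))
            = -(-1 : ℝ) ^ crossingNumber key M := by
        intro M hpm hnab
        obtain ⟨P, ⟨hPM, haP⟩, -⟩ := hpm.2.2 a haX
        obtain ⟨x, hxa, hPrep⟩ := block_rep (hpm.1 P hPM) haP
        have hxP : x ∈ P := by rw [hPrep]; simp
        have hxX : x ∈ X := hpm.2.1 P hPM hxP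
        have hxb : x ≠ b := by
          rintro rfl
          exact hnab (hPrep ▸ hPM)
        obtain ⟨Q, ⟨hQM, hbQ⟩, -⟩ := hpm.2.2 b hbX
        obtain ⟨y, hyb, hQrep⟩ := block_rep (hpm.1 Q hQM) hbQ
        have hyQ : y ∈ Q := by rw [hQrep]; simp
        have hyX : y ∈ X := hpm.2.1 Q hQM hyQ
        have hPQ : P ≠ Q := by
          intro h
          rw [← h, hPrep] at hbQ
          simp only [mem_insert, mem_singleton] at hbQ
          rcases hbQ with h' | h'
          · exact hba h'
          · exact hxb h'.symm
        have hya : y ≠ a := by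
          rintro rfl
          exact hPQ (pm_unique_block hpm hPM hQM haP hyQ)
        have hyx : y ≠ x := by
          rintro rfl
          exact hPQ (pm_unique_block hpm hPM hQM hxP hyQ)
        have hax : key a < key x := hlt_a x hxX hxa
        have hbx : key b < key x := hlt_b x hxX hxa hxb
        have hay : key a < key y := hlt_a y hyX hya
        have hby : key b < key y := hlt_b y hyX hya hyb
        have hkxy : key x ≠ key y := fun h => hyx (hinj hyX hxX h.symm)
        subst hPrep
        subst hQrep
        set C := (M.erase {a, x}).erase {b, y} with hC
        have hQmP : ({b, y} : Finset α) ∈ M.erase {a, x} :=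
          Finset.mem_erase.mpr ⟨Ne.symm hPQ, hQM⟩
        have hM : M = insert ({a, x} : Finset α) (insert ({b, y} : Finset α) C) := by
          rw [hC, Finset.insert_erase hQmP, Finset.insert_erase hPM]
        have hQC : ({b, y} : Finset α) ∉ C := Finset.notMem_erase _ _
        have hPC : ({a, x} : Finset α) ∉ insert ({b, y} : Finset α) C := by
          simp only [Finset.mem_insert]
          rintro (h | hPc)
          · exact hPQ h
          · exact Finset.notMem_erase ({a, x} : Finset α) _ (Finset.mem_of_mem_erase hPc)
        have hCblocks : ∀ B ∈ C, B ∈ M ∧ B ≠ ({a, x} : Finset α) ∧ B ≠ ({b, y} : Finset α) := by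
          intro B hB
          have h1 := Finset.mem_of_mem_erase hB
          exact ⟨Finset.mem_of_mem_erase h1, (Finset.mem_erase.mp h1).1,
            (Finset.mem_erase.mp hB).1⟩
        have hCav : ∀ B ∈ C, ∀ e ∈ B, e ∈ X ∧ e ≠ a ∧ e ≠ b ∧ e ≠ x ∧ e ≠ y := by
          intro B hB e heB
          obtain ⟨hBM, hBP, hBQ⟩ := hCblocks B hB
          refine ⟨hpm.2.1 B hBM heB, ?_, ?_, ?_, ?_⟩
          · rintro rfl; exact hBP (pm_unique_block hpm hBM hPM heB haP)
          · rintro rfl; exact hBQ (pm_unique_block hpm hBM hQM heB hbQ)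
          · rintro rfl; exact hBP (pm_unique_block hpm hBM hPM heB hxP)
          · rintro rfl; exact hBQ (pm_unique_block hpm hBM hQM heB hyQ)
        set sg := Equiv.swap a b with hsg
        have hsgx : sg x = x := Equiv.swap_apply_of_ne_of_ne hxa hxb
        have hsgy : sg y = y := Equiv.swap_apply_of_ne_of_ne hya hyb
        have hsgP : Finset.image sg {a, x} = ({b, x} : Finset α) := by
          rw [Finset.image_insert, Finset.image_singleton, hsgx, hsg, Equiv.swap_apply_left]
        have hsgQ : Finset.image sg {b, y} = ({a, y} : Finset α) := by
          rw [Finset.image_insert, Finset.image_singleton, hsgy, hsg, Equiv.swap_apply_right]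
        have hsgC : ∀ B ∈ C, Finset.image sg B = B := by
          intro B hB
          have heq : ∀ e ∈ B, sg e = id e := by
            intro e he
            obtain ⟨-, hea, heb, -, -⟩ := hCav B hB e he
            rw [hsg]; exact Equiv.swap_apply_of_ne_of_ne hea heb
          rw [Finset.image_congr heq, Finset.image_id]
        have hCim : C.image (Finset.image sg) = C := by
          rw [Finset.image_congr (g := id) (fun B hB => hsgC B hB), Finset.image_id]
        have hM' : M.image (Finset.image sg)
            = insert ({b, x} : Finset α) (insert ({a, y} : Finset α) C) := by
          conv_lhs => rw [hM]
          rw [Finset.image_insert, hsgP, Finset.image_insert, hsgQ, hCim]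
        have hbxC : ({b, x} : Finset α) ∉ insert ({a, y} : Finset α) C := by
          simp only [Finset.mem_insert]
          rintro (h | h)
          · have hbmem : b ∈ ({a, y} : Finset α) := h ▸ (by simp)
            simp only [mem_insert, mem_singleton] at hbmem
            rcases hbmem with h' | h'
            · exact hba h'
            · exact hyb h'.symm
          · exact (hCav _ h b (by simp)).2.2.1 rfl
        have hayC : ({a, y} : Finset α) ∉ C := fun h => (hCav _ h a (by simp)).2.1 rfl
        have hMne : M.image (Finset.image sg) ≠ M := by
          intro hEq
          have hbx_mem : ({b, x} : Finset α) ∈ M := by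
            rw [← hEq, hM']; exact Finset.mem_insert_self _ _
          have heq2 : ({b, x} : Finset α) = {b, y} :=
            pm_unique_block hpm hbx_mem hQM (by simp) hbQ
          have hxmem : x ∈ ({b, y} : Finset α) := heq2 ▸ (by simp)
          simp only [mem_insert, mem_singleton] at hxmem
          rcases hxmem with h' | h'
          · exact hxb h'
          · exact hyx h'.symm
        refine ⟨hMne, ?_⟩
        have c1 : CrossingBlocks key {a, x} {b, y} ↔ key x < key y := by
          rw [cross_iff hax hby]; omega
        have c2 : CrossingBlocks key {b, y} {a, x} ↔ key x < key y := by
          rw [cross_iff hby hax]; omega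
        have c3 : CrossingBlocks key {b, x} {a, y} ↔ key y < key x := by
          rw [cross_iff hbx hay]; omega
        have c4 : CrossingBlocks key {a, y} {b, x} ↔ key y < key x := by
          rw [cross_iff hay hbx]; omega
        have hmid : ∀ B ∈ C,
            cN key {b, x} B + cN key B {b, x} + cN key {a, y} B + cN key B {a, y}
              = cN key {a, x} B + cN key B {a, x} + cN key {b, y} B + cN key B {b, y} := by
          intro B hB
          have hBM := (hCblocks B hB).1
          obtain ⟨c, d, hcd, hBrep⟩ := card_two_rep hinj (hpm.1 B hBM) (hpm.2.1 B hBM)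
          have hcB : c ∈ B := hBrep ▸ by simp
          have hdB : d ∈ B := hBrep ▸ by simp
          obtain ⟨hcX, hca, hcb, -, -⟩ := hCav B hB c hcB
          obtain ⟨hdX, hda, hdb, -, -⟩ := hCav B hB d hdB
          have hkc : key b < key c := hlt_b c hcX hca hcb
          have hkd : key b < key d := hlt_b d hdX hda hdb
          subst hBrep
          have e1 : CrossingBlocks key {b, x} {c, d} ↔ (key c < key x ∧ key x < key d) := by
            rw [cross_iff hbx hcd]; omega
          have e2 : CrossingBlocks key {c, d} {b, x} ↔ (key c < key x ∧ key x < key d) := by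
            rw [cross_iff hcd hbx]; omega
          have e3 : CrossingBlocks key {a, y} {c, d} ↔ (key c < key y ∧ key y < key d) := by
            rw [cross_iff hay hcd]; omega
          have e4 : CrossingBlocks key {c, d} {a, y} ↔ (key c < key y ∧ key y < key d) := by
            rw [cross_iff hcd hay]; omega
          have e5 : CrossingBlocks key {a, x} {c, d} ↔ (key c < key x ∧ key x < key d) := by
            rw [cross_iff hax hcd]; omega
          have e6 : CrossingBlocks key {c, d} {a, x} ↔ (key c < key x ∧ key x < key d) := by
            rw [cross_iff hcd hax]; omega
          have e7 : CrossingBlocks key {b, y} {c, d} ↔ (key c < key y ∧ key y < key d) := by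
            rw [cross_iff hby hcd]; omega
          have e8 : CrossingBlocks key {c, d} {b, y} ↔ (key c < key y ∧ key y < key d) := by
            rw [cross_iff hcd hby]; omega
          simp only [cN, e1, e2, e3, e4, e5, e6, e7, e8]
        have h1 : cN key {a, x} {b, y} = (if key x < key y then 1 else 0) := by
          simp only [cN, c1]
        have h2 : cN key {b, y} {a, x} = (if key x < key y then 1 else 0) := by
          simp only [cN, c2]
        have h3 : cN key {b, x} {a, y} = (if key y < key x then 1 else 0) := by
          simp only [cN, c3]
        have h4 : cN key {a, y} {b, x} = (if key y < key x then 1 else 0) := by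
          simp only [cN, c4]
        have hNM : (∑ B₁ ∈ M, ∑ B₂ ∈ M, cN key B₁ B₂)
            = (∑ B ∈ C, (cN key {a, x} B + cN key B {a, x} + cN key {b, y} B + cN key B {b, y}))
              + (∑ B₁ ∈ C, ∑ B₂ ∈ C, cN key B₁ B₂)
              + 2 * (if key x < key y then 1 else 0) := by
          conv_lhs => rw [hM]
          rw [expand2 key _ _ _ hPC hQC, cN_self hax, cN_self hby, h1, h2]
          ring
        have hNM' : (∑ B₁ ∈ M.image (Finset.image sg), ∑ B₂ ∈ M.image (Finset.image sg),
              cN key B₁ B₂)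
            = (∑ B ∈ C, (cN key {a, x} B + cN key B {a, x} + cN key {b, y} B + cN key B {b, y}))
              + (∑ B₁ ∈ C, ∑ B₂ ∈ C, cN key B₁ B₂)
              + 2 * (if key y < key x then 1 else 0) := by
          conv_lhs => rw [hM']
          rw [expand2 key _ _ _ hbxC hayC, cN_self hbx, cN_self hay, h3, h4,
            Finset.sum_congr rfl hmid]
          ring
        rcases hkxy.lt_or_gt with hlt | hlt
        · have hcr : crossingNumber key (M.image (Finset.image sg)) + 1
              = crossingNumber key M := by
            rw [crossingNumber_eq_sum, crossingNumber_eq_sum, hNM, hNM']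
            rw [if_pos hlt, if_neg (by omega : ¬ key y < key x)]
            omega
          rw [← hcr, pow_succ]
          ring
        · have hcr : crossingNumber key M + 1
              = crossingNumber key (M.image (Finset.image sg)) := by
            rw [crossingNumber_eq_sum, crossingNumber_eq_sum, hNM, hNM']
            rw [if_pos hlt, if_neg (by omega : ¬ key x < key y)]
            omega
          rw [← hcr, pow_succ]
          ring
      -- split the sum according to whether {a,b} is a block
      rw [← Finset.sum_filter_add_sum_filter_not
            (filter (fun M => IsPerfectMatchingOn X M) univ)
            (fun M => ({a, b} : Finset α) ∈ M)]
      have hzero : ∑ M ∈ filter (fun M => ¬ ({a, b} : Finset α) ∈ M)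
            (filter (fun M => IsPerfectMatchingOn X M) univ),
          (-1 : ℝ) ^ crossingNumber key M = 0 := by
        refine Finset.sum_involution
          (fun M _ => M.image (Finset.image (Equiv.swap a b))) ?_ ?_ ?_ ?_
        · intro M hM
          obtain ⟨hM1, hmem⟩ := Finset.mem_filter.mp hM
          have hpm : IsPerfectMatchingOn X M := (Finset.mem_filter.mp hM1).2
          have := (hcore M hpm hmem).2
          rw [this]
          ring
        · intro M hM _
          obtain ⟨hM1, hmem⟩ := Finset.mem_filter.mp hM
          have hpm : IsPerfectMatchingOn X M := (Finset.mem_filter.mp hM1).2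
          exact (hcore M hpm hmem).1
        · intro M hM
          obtain ⟨hM1, hmem⟩ := Finset.mem_filter.mp hM
          have hpm : IsPerfectMatchingOn X M := (Finset.mem_filter.mp hM1).2
          refine Finset.mem_filter.mpr ⟨Finset.mem_filter.mpr
            ⟨Finset.mem_univ _, pm_image_swap haX hbX hpm⟩, ?_⟩
          intro hcontra
          obtain ⟨B, hBM, hBim⟩ := Finset.mem_image.mp hcontra
          have hswab : Finset.image (⇑(Equiv.swap a b)) ({a, b} : Finset α)
              = ({a, b} : Finset α) := by
            rw [Finset.image_insert, Finset.image_singleton, Equiv.swap_apply_left,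
              Equiv.swap_apply_right, Finset.pair_comm]
          have hBab : B = ({a, b} : Finset α) := by
            have h2 := congrArg (Finset.image (⇑(Equiv.swap a b))) hBim
            rw [hswab] at h2
            rw [← h2, Finset.image_image]
            have h3 : ∀ e ∈ B, (⇑(Equiv.swap a b) ∘ ⇑(Equiv.swap a b)) e = id e := by
              intro e _; simp [Equiv.swap_apply_self]
            rw [Finset.image_congr h3, Finset.image_id]
          rw [hBab] at hBM
          exact hmem hBM
        · intro M hM
          exact image_swap_invol a b M
      have hXsub : ({a, b} : Finset α) ⊆ X := by
        intro e he
        simp only [mem_insert, mem_singleton] at he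
        rcases he with rfl | rfl
        · exact haX
        · exact hbX
      have hone : ∑ M ∈ filter (fun M => ({a, b} : Finset α) ∈ M)
            (filter (fun M => IsPerfectMatchingOn X M) univ),
          (-1 : ℝ) ^ crossingNumber key M = 1 := by
        set X' := X \ {a, b} with hX'
        have hX'card : X'.card = n - 2 := by
          rw [hX', Finset.card_sdiff_of_subset hXsub, Finset.card_pair hne_ab, hcard]
        have hmemX' : ∀ e, e ∈ X' ↔ e ∈ X ∧ e ≠ a ∧ e ≠ b := by
          intro e
          rw [hX', Finset.mem_sdiff]
          simp only [mem_insert, mem_singleton, not_or]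
        have hIH := ih (n - 2) (by omega) X' hX'card
          (hinj.mono (by rw [hX']; exact Finset.coe_subset.mpr Finset.sdiff_subset))
          ⟨m - 1, by omega⟩
        refine Eq.trans ?_ hIH
        refine Finset.sum_nbij' (i := fun M => M.erase {a, b})
          (j := fun Cm => insert ({a, b} : Finset α) Cm) ?_ ?_ ?_ ?_ ?_
        · intro M hM
          obtain ⟨hM1, hmem⟩ := Finset.mem_filter.mp hM
          have hpm : IsPerfectMatchingOn X M := (Finset.mem_filter.mp hM1).2
          refine Finset.mem_filter.mpr ⟨Finset.mem_univ _, ?_, ?_, ?_⟩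
          · intro B hB; exact hpm.1 B (Finset.mem_of_mem_erase hB)
          · intro B hB e heB
            have hBM := Finset.mem_of_mem_erase hB
            have hBne := (Finset.mem_erase.mp hB).1
            rw [hmemX']
            refine ⟨hpm.2.1 B hBM heB, ?_, ?_⟩
            · rintro rfl
              exact hBne (pm_unique_block hpm hBM hmem heB (by simp))
            · rintro rfl
              exact hBne (pm_unique_block hpm hBM hmem heB (by simp))
          · intro e heX'
            rw [hmemX'] at heX'
            obtain ⟨heX, hea, heb⟩ := heX'
            obtain ⟨B, ⟨hBM, heB⟩, hu⟩ := hpm.2.2 e heX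
            have hBne : B ≠ {a, b} := by
              rintro rfl
              simp only [mem_insert, mem_singleton] at heB
              tauto
            exact ⟨B, ⟨Finset.mem_erase.mpr ⟨hBne, hBM⟩, heB⟩,
              fun B' hB' => hu B' ⟨Finset.mem_of_mem_erase hB'.1, hB'.2⟩⟩
        · intro Cm hCm
          have hpmC : IsPerfectMatchingOn X' Cm := (Finset.mem_filter.mp hCm).2
          refine Finset.mem_filter.mpr ⟨Finset.mem_filter.mpr
            ⟨Finset.mem_univ _, ?_, ?_, ?_⟩, Finset.mem_insert_self _ _⟩
          · intro B hB
            rcases Finset.mem_insert.mp hB with rfl | hB'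
            · exact Finset.card_pair hne_ab
            · exact hpmC.1 B hB'
          · intro B hB e heB
            rcases Finset.mem_insert.mp hB with rfl | hB'
            · exact hXsub heB
            · exact ((hmemX' e).mp (hpmC.2.1 B hB' heB)).1
          · intro e heX
            by_cases heab : e = a ∨ e = b
            · refine ⟨{a, b}, ⟨Finset.mem_insert_self _ _,
                by rcases heab with rfl | rfl <;> simp⟩, ?_⟩
              rintro B' ⟨hB', heB'⟩
              rcases Finset.mem_insert.mp hB' with rfl | hB''
              · rfl
              · exfalso
                have := (hmemX' e).mp (hpmC.2.1 B' hB'' heB')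
                tauto
            · push_neg at heab
              obtain ⟨B, ⟨hBC, heB⟩, hu⟩ := hpmC.2.2 e ((hmemX' e).mpr ⟨heX, heab.1, heab.2⟩)
              refine ⟨B, ⟨Finset.mem_insert_of_mem hBC, heB⟩, ?_⟩
              rintro B' ⟨hB', heB'⟩
              rcases Finset.mem_insert.mp hB' with rfl | hB''
              · exfalso
                simp only [mem_insert, mem_singleton] at heB'
                tauto
              · exact hu B' ⟨hB'', heB'⟩
        · intro M hM
          exact Finset.insert_erase (Finset.mem_filter.mp hM).2
        · intro Cm hCm
          have hpmC : IsPerfectMatchingOn X' Cm := (Finset.mem_filter.mp hCm).2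
          have habC : ({a, b} : Finset α) ∉ Cm := by
            intro h
            have := (hmemX' a).mp (hpmC.2.1 _ h (by simp : a ∈ ({a, b} : Finset α)))
            exact this.2.1 rfl
          exact Finset.erase_insert habC
        · intro M hM
          obtain ⟨hM1, hmem⟩ := Finset.mem_filter.mp hM
          have hpm : IsPerfectMatchingOn X M := (Finset.mem_filter.mp hM1).2
          have hCmem : M = insert ({a, b} : Finset α) (M.erase {a, b}) :=
            (Finset.insert_erase hmem).symm
          have hnotmem : ({a, b} : Finset α) ∉ M.erase {a, b} := Finset.notMem_erase _ _
          congr 1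
          rw [crossingNumber_eq_sum, crossingNumber_eq_sum]
          congr 1
          conv_lhs => rw [hCmem]
          rw [expand1 key _ _ hnotmem, cN_self hab]
          have hz : ∀ B ∈ M.erase {a, b}, cN key {a, b} B + cN key B {a, b} = 0 := by
            intro B hB
            have hBM := Finset.mem_of_mem_erase hB
            have hBne := (Finset.mem_erase.mp hB).1
            obtain ⟨c, d, hcd, hBrep⟩ := card_two_rep hinj (hpm.1 B hBM) (hpm.2.1 B hBM)
            have hcB : c ∈ B := hBrep ▸ by simp
            have hdB : d ∈ B := hBrep ▸ by simp
            have hfacts : ∀ e ∈ B, key b < key e := by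
              intro e heB
              have heX := hpm.2.1 B hBM heB
              refine hlt_b e heX ?_ ?_
              · rintro rfl; exact hBne (pm_unique_block hpm hBM hmem heB (by simp))
              · rintro rfl; exact hBne (pm_unique_block hpm hBM hmem heB (by simp))
            have hc := hfacts c hcB
            have hd := hfacts d hdB
            subst hBrep
            have z1 : ¬ CrossingBlocks key {a, b} {c, d} := by rw [cross_iff hab hcd]; omega
            have z2 : ¬ CrossingBlocks key {c, d} {a, b} := by rw [cross_iff hcd hab]; omega
            simp [cN, z1, z2]
          rw [Finset.sum_congr rfl hz]
          simp
      rw [hone, hzero]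
      norm_num

lemma vertex_sum [Fintype α] (key : α → ℕ) (X : Finset α)
    (hinj : Set.InjOn key ↑X) (heven : Even X.card) (r : α → ℝ) :
    ∑ M ∈ filter (fun M => IsPerfectMatchingOn X M) univ,
      ((-1 : ℝ) ^ crossingNumber key M * ∏ B ∈ M, ∏ e ∈ B, r e)
      = ∏ e ∈ X, r e := by
  have h1 : ∀ M ∈ filter (fun M => IsPerfectMatchingOn X M) univ,
      ((-1 : ℝ) ^ crossingNumber key M * ∏ B ∈ M, ∏ e ∈ B, r e)
        = ((-1 : ℝ) ^ crossingNumber key M) * ∏ e ∈ X, r e := by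
    intro M hM
    rw [pm_prod (Finset.mem_filter.mp hM).2 r]
  rw [Finset.sum_congr rfl h1, ← Finset.sum_mul,
    signed_sum key X.card X rfl hinj heven, one_mul]

end MDaux

/-- Matching decomposition at the vertices of an even graph (Proposition 2.7):
for a finite simple graph `G` all of whose degrees are even, edge weights `r`, and a
linear order on the edges incident to each vertex `v` (given by a key function
`rank v` injective on the incident edges), the signed sum over all families
`(M_v)` of local perfect matchings of the products of the weights equals
`∏_{e ∈ E(G)} r_e²`. -/
theorem matching_decomposition {V : Type} [Fintype V] [DecidableEq V]
    (G : SimpleGraph V) [DecidableRel G.Adj]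
    (heven : ∀ v : V, Even (G.degree v))
    (r : Sym2 V → ℝ) (rank : V → Sym2 V → ℕ)
    (hrank : ∀ v : V, Set.InjOn (rank v) (G.incidenceFinset v : Set (Sym2 V))) :
    ∑ M ∈ (@Finset.filter _
        (fun M : V → Finset (Finset (Sym2 V)) =>
          ∀ v : V, IsPerfectMatchingOn (G.incidenceFinset v) (M v))
        (Classical.decPred _) Finset.univ),
      ∏ v : V, ((-1 : ℝ) ^ crossingNumber (rank v) (M v) * ∏ B ∈ M v, ∏ e ∈ B, r e)
    = ∏ e ∈ G.edgeFinset, (r e) ^ 2 := by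
  classical
  have hfil : (@Finset.filter _
        (fun M : V → Finset (Finset (Sym2 V)) =>
          ∀ v : V, IsPerfectMatchingOn (G.incidenceFinset v) (M v))
        (Classical.decPred _) Finset.univ)
      = Fintype.piFinset (fun v : V =>
          Finset.filter (fun m => IsPerfectMatchingOn (G.incidenceFinset v) m)
            Finset.univ) := by
    ext M
    simp only [Finset.mem_filter, Finset.mem_univ, true_and, Fintype.mem_piFinset]
  have hswap := Finset.prod_univ_sum
    (fun v : V => Finset.filter
      (fun m => IsPerfectMatchingOn (G.incidenceFinset v) m) Finset.univ)
    (fun v m => ((-1 : ℝ) ^ crossingNumber (rank v) m * ∏ B ∈ m, ∏ e ∈ B, r e))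
  rw [hfil, ← hswap]
  have hv : ∀ v : V,
      ∑ m ∈ Finset.filter (fun m => IsPerfectMatchingOn (G.incidenceFinset v) m)
          Finset.univ,
        ((-1 : ℝ) ^ crossingNumber (rank v) m * ∏ B ∈ m, ∏ e ∈ B, r e)
        = ∏ e ∈ G.incidenceFinset v, r e := by
    intro v
    apply MDaux.vertex_sum (rank v) (G.incidenceFinset v) (hrank v)
    rw [SimpleGraph.card_incidenceFinset_eq_degree]
    exact heven v
  rw [Finset.prod_congr rfl (fun v _ => hv v)]
  -- double counting: each edge is incident to exactly two vertices
  have hinc : ∀ v : V, G.incidenceFinset v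
      = Finset.filter (fun e => v ∈ e) G.edgeFinset :=
    fun v => SimpleGraph.incidenceFinset_eq_filter G v
  calc ∏ v : V, ∏ e ∈ G.incidenceFinset v, r e
      = ∏ v : V, ∏ e ∈ G.edgeFinset, (if v ∈ e then r e else 1) := by
        refine Finset.prod_congr rfl fun v _ => ?_
        rw [hinc v, Finset.prod_filter]
    _ = ∏ e ∈ G.edgeFinset, ∏ v : V, (if v ∈ e then r e else 1) := Finset.prod_comm
    _ = ∏ e ∈ G.edgeFinset, (r e) ^ 2 := by
        refine Finset.prod_congr rfl fun e he => ?_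
        rw [← Finset.prod_filter]
        rw [Finset.prod_const]
        congr 1
        induction e using Sym2.inductionOn with
        | hf u w =>
          have hadj : G.Adj u w := (SimpleGraph.mem_edgeFinset.mp he)
          have huw : u ≠ w := G.ne_of_adj hadj
          have : Finset.filter (fun v => v ∈ s(u, w)) Finset.univ = {u, w} := by
            ext v
            simp [Sym2.mem_iff]
          rw [this, Finset.card_pair huw]
end

section
/- Let g ∈ ℕ, let J be a finite index set, and let a, b : Fin g → J → ℕ. Set A_m = Σ_{j ∈ J} a_m(j) and B_m = Σ_{j ∈ J} b_m(j). Then 2^g · (−1)^{Σ_{m=1}^{g} (A_m B_m + A_m + B_m)} = Σ_{u, v : Fin g → {0,1}} (−1)^{Σ_{m=1}^{g} (1 + u_m + v_m + u_m v_m)} · (−1)^{Σ_{j ∈ J} Σ_{m=1}^{g} (u_m a_m(j) + v_m b_m(j))}. (The algebraic identity underlying Lemma 2.26, the factorization of the loop weights over H₁(Σ, ℤ₂) ≅ {0,1}^{2g}, where a_m(j), b_m(j) play the role of the intersection numbers of the j-th curve with the symplectic basis curves e^m_1, e^m_2.) -/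
/-!
For each `m`, `2 (-1)^(AB + A + B)` is the sum of the four signs
`(-1)^(1 + x + y + xy) (-1)^(xA + yB)` over `(x, y) ∈ {0,1}²`; expanding the product of these
sums over `m` gives the sum over pairs `u, v : Fin g → {0,1}`, and exchanging the sums over `j`
and `m` turns `(-1)^(Σ_j Σ_m …)` into the product over `m` of the `m`-th characters.
-/

open Finset

theorem sum_fin_two_neg_one_pow_mul_neg_one_pow {R : Type*} [CommRing R] (A B : ℕ) :
    ∑ x : Fin 2, ∑ y : Fin 2,
      (-1 : R) ^ (1 + (x : ℕ) + (y : ℕ) + (x : ℕ) * (y : ℕ)) * (-1) ^ ((x : ℕ) * A + (y : ℕ) * B) =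
      2 * (-1) ^ (A * B + A + B) := by
  simp only [Fin.sum_univ_two, Fin.val_zero, Fin.val_one]
  rcases Nat.even_or_odd A with hA | hA <;> rcases Nat.even_or_odd B with hB | hB <;>
    norm_num [pow_add, pow_mul, hA.neg_one_pow, hB.neg_one_pow, mul_comm]

theorem prod_sum_sum_eq_sum_pi_sum_pi_prod {ι α β R : Type*} [Fintype ι] [DecidableEq ι]
    [Fintype α] [Fintype β] [CommSemiring R] (f : ι → α → β → R) :
    ∏ i, ∑ x, ∑ y, f i x y = ∑ u : ι → α, ∑ v : ι → β, ∏ i, f i (u i) (v i) := by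
  rw [prod_univ_sum, Fintype.piFinset_univ]
  exact sum_congr rfl fun u _ => by rw [prod_univ_sum, Fintype.piFinset_univ]

/-- The algebraic identity underlying Lemma 2.26: the product of the signs
`(−1)^{A_m B_m + A_m + B_m}` over `m`, where `A_m = Σ_j a_m(j)` and `B_m = Σ_j b_m(j)`,
expands (after multiplying by `2^g`) as a sum of character-type signs over all pairs of
functions `u, v : Fin g → {0,1}`. -/
theorem sign_factorization_identity (g : ℕ) (J : Type) [Fintype J]
    (a b : Fin g → J → ℕ) :
    (2 : ℤ) ^ g *
        (-1) ^ (∑ m : Fin g,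
          ((∑ j : J, a m j) * (∑ j : J, b m j) + (∑ j : J, a m j) + (∑ j : J, b m j))) =
      ∑ u : Fin g → Fin 2, ∑ v : Fin g → Fin 2,
        (-1 : ℤ) ^ (∑ m : Fin g, (1 + (u m : ℕ) + (v m : ℕ) + (u m : ℕ) * (v m : ℕ))) *
          (-1) ^ (∑ j : J, ∑ m : Fin g, ((u m : ℕ) * a m j + (v m : ℕ) * b m j)) := by
  set A := fun m => ∑ j : J, a m j
  set B := fun m => ∑ j : J, b m j
  have h_swap (u v : Fin g → Fin 2) :
      ∑ j : J, ∑ m : Fin g, ((u m : ℕ) * a m j + (v m : ℕ) * b m j) =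
        ∑ m : Fin g, ((u m : ℕ) * A m + (v m : ℕ) * B m) := by
    rw [sum_comm]
    simp only [A, B, mul_sum, sum_add_distrib]
  calc (2 : ℤ) ^ g * (-1) ^ (∑ m, (A m * B m + A m + B m))
      = ∏ m : Fin g, 2 * (-1 : ℤ) ^ (A m * B m + A m + B m) := by
        rw [prod_mul_distrib, prod_const, card_univ, Fintype.card_fin, prod_pow_eq_pow_sum]
    _ = ∏ m : Fin g, ∑ x : Fin 2, ∑ y : Fin 2,
          (-1 : ℤ) ^ (1 + (x : ℕ) + (y : ℕ) + (x : ℕ) * (y : ℕ)) *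
            (-1) ^ ((x : ℕ) * A m + (y : ℕ) * B m) := by
        simp only [sum_fin_two_neg_one_pow_mul_neg_one_pow]
    _ = _ := by
        rw [prod_sum_sum_eq_sum_pi_sum_pi_prod]
        simp only [h_swap, prod_mul_distrib, prod_pow_eq_pow_sum]
end

section
/- Let G be a finite connected simple graph with coupling constants L : E(G) → ℝ. Then Σ_{σ : V(G) → {-1,1}} exp(Σ_{{x,y} ∈ E(G)} L_{{x,y}} σ_x σ_y) = 2 · (∏_{e ∈ E(G)} e^{L_e}) · Σ_{S ∈ 𝒞(G)} ∏_{e ∈ S} e^{−2 L_e}, where 𝒞(G) = { δ(A) : A ⊆ V(G) } is the collection of cut sets of G. (The low-temperature expansion, the content of Lemma 3.6: spin configurations correspond two-to-one to their disagreement edge sets, which for a connected graph are exactly the cuts.) -/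
/-!
Write a spin configuration as `σ_A`, equal to `-1` exactly on a vertex set `A`. An edge
contributes `e^{L_e}` to the Boltzmann weight of `σ_A` if it lies outside the cut `δ(A)`
and `e^{-L_e} = e^{L_e} e^{-2 L_e}` if it lies in it, so the weight of `σ_A` is
`∏_e e^{L_e} · ∏_{e ∈ δ(A)} e^{-2 L_e}`. On a connected graph `δ(A) = δ(B)` forces
`B = A` or `B = Aᶜ`, since "`v ∈ A ↔ v ∈ B`" does not change along edges; as `A ≠ Aᶜ`,
every cut arises from exactly two vertex sets.
-/

open Finset

/-- The product of the spins at the two endpoints of an edge, as a real number. -/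
def spinProd {V : Type} (σ : V → ℤˣ) : Sym2 V → ℝ :=
  Sym2.lift ⟨fun x y => ((σ x : ℤ) : ℝ) * ((σ y : ℤ) : ℝ), fun x y => by ring⟩

/-- The unordered pair `e` has exactly one endpoint in `A`. -/
def oneEndIn {V : Type} [DecidableEq V] (A : Finset V) : Sym2 V → Prop :=
  Sym2.lift ⟨fun x y => Xor' (x ∈ A) (y ∈ A), fun x y => propext (by unfold Xor' Xor; tauto)⟩

/-- The cut `δ(A)` determined by a vertex set `A`: the set of edges of `G` with exactly
one endpoint in `A`. -/
noncomputable def cutSet {V : Type} [Fintype V] [DecidableEq V] (G : SimpleGraph V)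
    [DecidableRel G.Adj] (A : Finset V) : Finset (Sym2 V) :=
  @Finset.filter _ (fun e => oneEndIn A e) (Classical.decPred _) G.edgeFinset

/-- The collection `𝒞(G)` of cut sets of `G`, each counted once. -/
noncomputable def cutSets {V : Type} [Fintype V] [DecidableEq V] (G : SimpleGraph V)
    [DecidableRel G.Adj] : Finset (Finset (Sym2 V)) :=
  (Finset.univ : Finset (Finset V)).image (cutSet G)

lemma oneEndIn_mk {V : Type} [DecidableEq V] {A : Finset V} {x y : V} :
    oneEndIn A s(x, y) ↔ (x ∈ A ↔ y ∉ A) :=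
  xor_iff_iff_not

namespace SimpleGraph

variable {V : Type}

lemma Reachable.iff_of_adj {G : SimpleGraph V} {P : V → Prop}
    (hP : ∀ ⦃x y⦄, G.Adj x y → (P x ↔ P y)) {u v : V} (h : G.Reachable u v) :
    P u ↔ P v := by
  obtain ⟨w⟩ := h
  induction w with
  | nil => exact Iff.rfl
  | cons hadj _ ih => exact (hP hadj).trans ih

variable [Fintype V] [DecidableEq V] {G : SimpleGraph V} [DecidableRel G.Adj]

lemma mem_cutSet {A : Finset V} {e : Sym2 V} :
    e ∈ cutSet G A ↔ e ∈ G.edgeFinset ∧ oneEndIn A e := by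
  classical
  simp [cutSet]

lemma cutSet_compl (A : Finset V) : cutSet G Aᶜ = cutSet G A := by
  ext e
  induction e using Sym2.ind with
  | _ x y =>
    simp only [mem_cutSet, oneEndIn_mk, mem_compl]
    tauto

lemma Connected.eq_or_eq_compl_of_cutSet_eq (hG : G.Connected) {A B : Finset V}
    (h : cutSet G A = cutSet G B) : B = A ∨ B = Aᶜ := by
  have hadj : ∀ ⦃x y⦄, G.Adj x y → ((x ∈ A ↔ x ∈ B) ↔ (y ∈ A ↔ y ∈ B)) := by
    intro x y hxy
    have hxy' := congrArg (s(x, y) ∈ ·) h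
    simp only [mem_cutSet, oneEndIn_mk, mem_edgeFinset, mem_edgeSet, hxy, true_and,
      eq_iff_iff] at hxy'
    tauto
  obtain ⟨v₀⟩ := hG.nonempty
  by_cases h₀ : v₀ ∈ A ↔ v₀ ∈ B
  · refine .inl (ext fun v => ?_)
    have := (hG v₀ v).iff_of_adj hadj
    tauto
  · refine .inr (ext fun v => ?_)
    have := (hG v₀ v).iff_of_adj hadj
    rw [mem_compl]
    tauto

lemma Connected.card_filter_cutSet_eq (hG : G.Connected) (A : Finset V) :
    #{B | cutSet G B = cutSet G A} = 2 := by
  have hfiber : ({B | cutSet G B = cutSet G A} : Finset (Finset V)) = {A, Aᶜ} := by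
    ext B
    simp only [mem_filter, mem_univ, true_and, mem_insert, mem_singleton]
    refine ⟨fun h => hG.eq_or_eq_compl_of_cutSet_eq h.symm, ?_⟩
    rintro (rfl | rfl)
    exacts [rfl, cutSet_compl A]
  have := hG.nonempty
  rw [hfiber, card_pair ne_compl_self]

lemma Connected.sum_cutSet {M : Type*} [AddCommMonoid M] (hG : G.Connected)
    (f : Finset (Sym2 V) → M) :
    ∑ A : Finset V, f (cutSet G A) = 2 • ∑ S ∈ cutSets G, f S := by
  rw [sum_comp, cutSets, smul_sum]
  refine sum_congr rfl fun S hS => ?_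
  obtain ⟨A, -, rfl⟩ := mem_image.mp hS
  rw [hG.card_filter_cutSet_eq]

end SimpleGraph

section Spins

variable {V : Type} [DecidableEq V]

def spinsOf (A : Finset V) (v : V) : ℤˣ := if v ∈ A then -1 else 1

open Classical in
lemma spinProd_spinsOf (A : Finset V) (e : Sym2 V) :
    spinProd (spinsOf A) e = if oneEndIn A e then -1 else 1 := by
  induction e using Sym2.ind with
  | _ x y =>
    by_cases hx : x ∈ A <;> by_cases hy : y ∈ A <;>
      simp [spinProd, oneEndIn_mk, spinsOf, hx, hy]

variable [Fintype V]

def spinsOfEquiv : Finset V ≃ (V → ℤˣ) where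
  toFun := spinsOf
  invFun σ := {v | σ v = -1}
  left_inv A := by
    ext v
    by_cases hv : v ∈ A <;> simp [spinsOf, hv]
  right_inv σ := by
    funext v
    rcases Int.units_eq_one_or (σ v) with h | h <;> simp [spinsOf, h]

lemma exp_energy_spinsOf (G : SimpleGraph V) [DecidableRel G.Adj] (L : Sym2 V → ℝ)
    (A : Finset V) :
    Real.exp (∑ e ∈ G.edgeFinset, L e * spinProd (spinsOf A) e) =
      (∏ e ∈ G.edgeFinset, Real.exp (L e)) * ∏ e ∈ cutSet G A, Real.exp (-2 * L e) := by
  classical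
  have hedge : ∀ e, Real.exp (L e * spinProd (spinsOf A) e) =
      Real.exp (L e) * if oneEndIn A e then Real.exp (-2 * L e) else 1 := by
    intro e
    rw [spinProd_spinsOf]
    split_ifs
    · rw [← Real.exp_add]; ring_nf
    · simp
  rw [Real.exp_sum, prod_congr rfl fun e _ => hedge e, prod_mul_distrib, cutSet, prod_filter]

end Spins

/-- The low-temperature expansion (Lemma 3.6): for a finite connected simple graph, the
Ising partition function equals `2 · ∏_e e^{L_e} · Σ_{S ∈ 𝒞(G)} ∏_{e ∈ S} e^{−2L_e}`,
the sum running over all cut sets of `G`. -/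
theorem ising_low_temperature_expansion {V : Type} [Fintype V] [DecidableEq V]
    (G : SimpleGraph V) [DecidableRel G.Adj] (hconn : G.Connected) (L : Sym2 V → ℝ) :
    ∑ σ : V → ℤˣ, Real.exp (∑ e ∈ G.edgeFinset, L e * spinProd σ e) =
      2 * (∏ e ∈ G.edgeFinset, Real.exp (L e)) *
        ∑ S ∈ cutSets G, ∏ e ∈ S, Real.exp (-2 * L e) := by
  rw [← spinsOfEquiv.sum_comp]
  simp only [spinsOfEquiv, Equiv.coe_fn_mk, exp_energy_spinsOf, ← mul_sum,
    hconn.sum_cutSet fun S => ∏ e ∈ S, Real.exp (-2 * L e), nsmul_eq_mul, Nat.cast_ofNat]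
  ring
end
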